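/- Let f, g : ℕ₀ → ℂ be finitely supported sequences and α ≥ 0. Then for every n ∈ ℕ₀: W^α(f*g)(n) = ∑_{j=0}^n W^α g(j)·∑_{p=n-j}^n k^α(p-n+j)·W^α f(p) − ∑_{j=n+1}^∞ W^α g(j)·∑_{p=n+1}^∞ k^α(p-n+j)·W^α f(p), where all series are finite sums since W^α f and W^α g are finitely supported. -/

import Mathlib

/-- The Cesàro kernel `k^α(n) = Γ(n+α)/(Γ(α)·Γ(n+1))` for `α > 0`. -/
noncomputable def cesK (α : ℝ) (n : ℕ) : ℝ :=
  Real.Gamma ((n : ℝ) + α) / (Real.Gamma α * Real.Gamma ((n : ℝ) + 1))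

/-- The Cesàro kernel extended to `α = 0` by `k^0(n) = δ_{0,n}`. -/
noncomputable def cesK0 (α : ℝ) (n : ℕ) : ℝ :=
  if α = 0 then (if n = 0 then 1 else 0) else cesK α n

/-- The Weyl sum of order `α`: `W^{-α}f(n) = ∑_{j=n}^∞ k^α(j-n)·f(j)`. -/
noncomputable def weylSum {X : Type*} [AddCommMonoid X] [Module ℝ X] (α : ℝ) (f : ℕ → X) :
    ℕ → X :=
  fun n => ∑ᶠ j : ℕ, cesK α j • f (j + n)

/-- The forward difference operator `Δh(n) = h(n+1) - h(n)`. -/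
def fdiff {X : Type*} [AddCommGroup X] (f : ℕ → X) : ℕ → X := fun n => f (n + 1) - f n

/-- The Weyl difference of order `α > 0`:
`W^α f(n) = (-1)^m Δ^m W^{-(m-α)} f(n)` with `m = [α]+1`; and `W^0 f = f`. -/
noncomputable def weylDiff {X : Type*} [AddCommGroup X] [Module ℝ X] (α : ℝ) (f : ℕ → X) :
    ℕ → X :=
  if α = 0 then f
  else ((-1 : ℝ) ^ (⌊α⌋₊ + 1)) • fdiff^[⌊α⌋₊ + 1] (weylSum ((⌊α⌋₊ : ℝ) + 1 - α) f)

/-- Convolution of sequences: `(f*g)(n) = ∑_{j=0}^n f(n-j)·g(j)`. -/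
noncomputable def conv (f g : ℕ → ℂ) (n : ℕ) : ℂ := ∑ j ∈ Finset.range (n + 1), f (n - j) * g j


/-!
For `α > 0` put `F = W^α f` and `G = W^α g`; these are again finitely supported. The Cesàro kernels
are `k^α(n) = multichoose α n`, so Chu–Vandermonde gives the semigroup law
`W^{-β} W^{-γ} = W^{-(β+γ)}`, and together with `Δ W^{-1} = -1` this makes `W^α` and `W^{-α}`
mutually inverse on finitely supported sequences. Hence `f * g = W^{-α}F * W^{-α}G`, and it suffices
to show that this equals `W^{-α}` of the right-hand side. Both sides are bilinear in `(F, G)`; the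
coefficients of `F p · G j` are sums of `k(u) k(M - u)`, `M = p + j - n`, over index intervals, and
they agree because that summand is invariant under the reflection `u ↦ M - u`.
For `α = 0` the kernel is `δ₀` and the formula is the definition of the convolution.
-/

open Finset

lemma Ring.multichoose_add {R : Type*} [CommRing R] [BinomialRing R] (r s : R) (m : ℕ) :
    Ring.multichoose (r + s) m =
      ∑ ij ∈ antidiagonal m, Ring.multichoose r ij.1 * Ring.multichoose s ij.2 := by
  have h := Ring.add_choose_eq m (Commute.all (-r) (-s))
  have hsign : ∀ ij ∈ antidiagonal m, Ring.choose (-r) ij.1 * Ring.choose (-s) ij.2 =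
      Int.negOnePow m • (Ring.multichoose r ij.1 * Ring.multichoose s ij.2) := by
    intro ij hij
    rw [← mem_antidiagonal.1 hij, Ring.choose_neg', Ring.choose_neg', Nat.cast_add,
      Int.negOnePow_add, smul_mul_smul_comm]
  rwa [← neg_add, Ring.choose_neg', sum_congr rfl hsign, ← smul_sum, smul_left_cancel_iff] at h

lemma Real.Gamma_nat_add {x : ℝ} (hx : 0 < x) (n : ℕ) :
    Real.Gamma (n + x) = Real.Gamma x * (ascPochhammer ℝ n).eval x := by
  induction n with
  | zero => simp
  | succ n ih =>
    rw [Nat.cast_succ, add_right_comm, Real.Gamma_add_one (by positivity), ih,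
      ascPochhammer_succ_eval]
    ring

lemma cesK_eq_multichoose {α : ℝ} (hα : 0 < α) (n : ℕ) : cesK α n = Ring.multichoose α n := by
  have h := Ring.factorial_nsmul_multichoose_eq_ascPochhammer α n
  rw [Polynomial.ascPochhammer_smeval_eq_eval, nsmul_eq_mul] at h
  rw [cesK, Real.Gamma_nat_add hα, Real.Gamma_nat_eq_factorial, ← h]
  have := (Real.Gamma_pos_of_pos hα).ne'
  have : (n.factorial : ℝ) ≠ 0 := Nat.cast_ne_zero.2 n.factorial_ne_zero
  field_simp

lemma sum_cesK_mul_cesK {β γ : ℝ} (hβ : 0 < β) (hγ : 0 < γ) (m : ℕ) :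
    ∑ i ∈ range (m + 1), cesK β i * cesK γ (m - i) = cesK (β + γ) m := by
  simp only [cesK_eq_multichoose hβ, cesK_eq_multichoose hγ, cesK_eq_multichoose (add_pos hβ hγ),
    Ring.multichoose_add, Nat.sum_antidiagonal_eq_sum_range_succ_mk]

lemma cesK_one (n : ℕ) : cesK 1 n = 1 := by
  rw [cesK_eq_multichoose one_pos, Ring.multichoose_one]

lemma exists_forall_ge_eq_zero {M : Type*} [Zero M] {f : ℕ → M} (hf : (Function.support f).Finite) :
    ∃ N, ∀ m ≥ N, f m = 0 := by
  obtain ⟨B, hB⟩ := hf.bddAbove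
  exact ⟨B + 1, fun m hm => Function.notMem_support.1 fun h => by have := hB h; omega⟩

section RangeSums

variable {M : Type*} [AddCommMonoid M] {X : ℕ → M} {N : ℕ}

lemma sum_eq_sum_range_ite (hX : ∀ m ≥ N, X m = 0) (s : Finset ℕ) :
    ∑ i ∈ s, X i = ∑ i ∈ range N, if i ∈ s then X i else 0 := by
  rw [sum_ite_mem, sum_subset inter_subset_right fun i hs hi => hX i ?_]
  simpa [hs] using hi

lemma finsum_cond_eq_sum_range_ite (hX : ∀ m ≥ N, X m = 0) (P : ℕ → Prop) [DecidablePred P] :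
    ∑ᶠ (i) (_ : P i), X i = ∑ i ∈ range N, if P i then X i else 0 := by
  rw [← sum_filter]
  refine finsum_cond_eq_sum_of_cond_iff X fun {i} hi => ?_
  have : i < N := by by_contra h; exact hi (hX i (by omega))
  simp [this]

end RangeSums

section WeylSum

variable {X : Type*} [AddCommGroup X] {N : ℕ}

lemma fdiff_eq_zero_of_le {u : ℕ → X} (hu : ∀ m ≥ N, u m = 0) : ∀ m ≥ N, fdiff u m = 0 :=
  fun m hm => by rw [fdiff, hu (m + 1) (by omega), hu m hm, sub_zero]

lemma iterate_fdiff_eq_zero_of_le {u : ℕ → X} (hu : ∀ m ≥ N, u m = 0) (k : ℕ) :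
    ∀ m ≥ N, fdiff^[k] u m = 0 := by
  induction k generalizing u with
  | zero => exact hu
  | succ k ih => exact ih (fdiff_eq_zero_of_le hu)

variable [Module ℝ X] {F : ℕ → X}

lemma weylSum_eq_sum_range (hF : ∀ m ≥ N, F m = 0) (β : ℝ) (n : ℕ) :
    weylSum β F n = ∑ j ∈ range N, cesK β j • F (j + n) := by
  refine finsum_eq_sum_of_support_subset _ fun j hj => ?_
  by_contra hjN
  simp only [coe_range, Set.mem_Iio, not_lt] at hjN
  exact hj (by simp only [hF (j + n) (by omega), smul_zero])

lemma weylSum_eq_zero_of_le (hF : ∀ m ≥ N, F m = 0) (β : ℝ) : ∀ m ≥ N, weylSum β F m = 0 :=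
  fun m hm => by
    rw [weylSum_eq_sum_range hF]
    exact sum_eq_zero fun j _ => by rw [hF (j + m) (by omega), smul_zero]

lemma weylSum_eq_sum_range_ite (hF : ∀ m ≥ N, F m = 0) (β : ℝ) (m : ℕ) :
    weylSum β F m = ∑ p ∈ range N, (if m ≤ p then cesK β (p - m) else 0) • F p := by
  calc weylSum β F m = ∑ j ∈ range (N - m), cesK β j • F (j + m) := by
        rw [weylSum_eq_sum_range hF]
        refine (sum_subset (range_subset_range.2 (Nat.sub_le N m)) fun j _ hj => ?_).symm
        simp only [mem_range, not_lt] at hj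
        rw [hF _ (by omega), smul_zero]
    _ = ∑ p ∈ range N with m ≤ p, cesK β (p - m) • F p := by
        rw [show (range N).filter (m ≤ ·) = Ico m N by ext; simp; omega, sum_Ico_eq_sum_range]
        exact sum_congr rfl fun j _ => by rw [Nat.add_sub_cancel_left, add_comm]
    _ = _ := by simp only [sum_filter, ite_smul, zero_smul]

lemma weylSum_smul (β c : ℝ) : weylSum β (c • F) = c • weylSum β F := by
  funext n
  simp only [weylSum, Pi.smul_apply, smul_finsum, smul_comm c]

lemma weylSum_weylSum {β γ : ℝ} (hβ : 0 < β) (hγ : 0 < γ) (hF : ∀ m ≥ N, F m = 0) :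
    weylSum β (weylSum γ F) = weylSum (β + γ) F := by
  funext n
  simp only [weylSum_eq_sum_range (weylSum_eq_zero_of_le hF γ), weylSum_eq_sum_range hF,
    smul_sum, smul_smul, ← sum_cesK_mul_cesK hβ hγ, sum_smul]
  calc ∑ j ∈ range N, ∑ i ∈ range N, (cesK β j * cesK γ i) • F (i + (j + n))
      = ∑ j ∈ range N, ∑ i ∈ range N, (cesK β j * cesK γ i) • F (j + i + n) :=
        sum_congr rfl fun j _ => sum_congr rfl fun i _ => by rw [add_left_comm, add_assoc]
    _ = ∑ j ∈ range N, ∑ i ∈ range (N - j), (cesK β j * cesK γ i) • F (j + i + n) :=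
        sum_congr rfl fun j _ => (sum_subset (range_subset_range.2 (Nat.sub_le N j)) fun i _ hi => by
          simp only [mem_range, not_lt] at hi; rw [hF _ (by omega), smul_zero]).symm
    _ = ∑ s ∈ range N, ∑ i ∈ range (s + 1), (cesK β i * cesK γ (s - i)) • F (i + (s - i) + n) :=
        (sum_range_diag_flip N fun j i => (cesK β j * cesK γ i) • F (j + i + n)).symm
    _ = _ := sum_congr rfl fun s _ => sum_congr rfl fun i hi => by
        rw [Nat.add_sub_cancel' (Nat.lt_succ_iff.1 (mem_range.1 hi))]

lemma fdiff_weylSum (hF : ∀ m ≥ N, F m = 0) (β : ℝ) :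
    fdiff (weylSum β F) = weylSum β (fdiff F) := by
  funext n
  simp only [fdiff, weylSum_eq_sum_range hF, weylSum_eq_sum_range (fdiff_eq_zero_of_le hF),
    ← sum_sub_distrib, ← smul_sub, add_assoc]

lemma iterate_fdiff_weylSum (hF : ∀ m ≥ N, F m = 0) (β : ℝ) (k : ℕ) :
    fdiff^[k] (weylSum β F) = weylSum β (fdiff^[k] F) := by
  induction k generalizing F with
  | zero => rfl
  | succ k ih =>
    rw [Function.iterate_succ_apply, Function.iterate_succ_apply, fdiff_weylSum hF,
      ih (fdiff_eq_zero_of_le hF)]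

lemma fdiff_weylSum_one (hF : ∀ m ≥ N, F m = 0) : fdiff (weylSum 1 F) = -F := by
  funext n
  have h := sum_range_succ' (fun j => F (j + n)) N
  rw [sum_range_succ, hF (N + n) (by omega), add_zero, zero_add] at h
  simp only [fdiff, weylSum_eq_sum_range hF, cesK_one, one_smul, Pi.neg_apply, ← add_assoc,
    add_right_comm _ 1 n, h]
  abel

lemma iterate_fdiff_weylSum_natCast_add_one (hF : ∀ m ≥ N, F m = 0) (k : ℕ) :
    fdiff^[k + 1] (weylSum ((k : ℝ) + 1) F) = (-1 : ℝ) ^ (k + 1) • F := by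
  induction k generalizing F with
  | zero => simp [fdiff_weylSum_one hF]
  | succ k ih =>
    have hsplit : weylSum (((k + 1 : ℕ) : ℝ) + 1) F = weylSum ((k : ℝ) + 1) (weylSum 1 F) := by
      rw [weylSum_weylSum (by positivity) one_pos hF, Nat.cast_succ]
    rw [hsplit, Function.iterate_succ_apply, fdiff_weylSum (weylSum_eq_zero_of_le hF 1),
      fdiff_weylSum_one hF, ih (fun m hm => by rw [Pi.neg_apply, hF m hm, neg_zero]),
      smul_neg, ← neg_smul, pow_succ _ (k + 1), mul_neg_one]

lemma weylDiff_eq_zero_of_le (hF : ∀ m ≥ N, F m = 0) (α : ℝ) : ∀ m ≥ N, weylDiff α F m = 0 := by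
  intro m hm
  unfold weylDiff
  split_ifs
  · exact hF m hm
  · rw [Pi.smul_apply, iterate_fdiff_eq_zero_of_le (weylSum_eq_zero_of_le hF _) _ m hm, smul_zero]

lemma weylDiff_weylSum {α : ℝ} (hα : 0 < α) (hF : ∀ m ≥ N, F m = 0) :
    weylDiff α (weylSum α F) = F := by
  have hβ : 0 < (⌊α⌋₊ : ℝ) + 1 - α := by linarith [Nat.lt_floor_add_one α]
  rw [weylDiff, if_neg hα.ne', weylSum_weylSum hβ hα hF, sub_add_cancel,
    iterate_fdiff_weylSum_natCast_add_one hF, smul_smul, ← mul_pow, neg_one_mul, neg_neg, one_pow,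
    one_smul]

lemma weylSum_weylDiff {α : ℝ} (hα : 0 < α) (hF : ∀ m ≥ N, F m = 0) :
    weylSum α (weylDiff α F) = F := by
  have hβ : 0 < (⌊α⌋₊ : ℝ) + 1 - α := by linarith [Nat.lt_floor_add_one α]
  have hG := weylSum_eq_zero_of_le hF ((⌊α⌋₊ : ℝ) + 1 - α)
  rw [weylDiff, if_neg hα.ne', weylSum_smul, ← iterate_fdiff_weylSum hG,
    weylSum_weylSum hα hβ hF, add_sub_cancel, iterate_fdiff_weylSum_natCast_add_one hF, smul_smul,
    ← mul_pow, neg_one_mul, neg_neg, one_pow, one_smul]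

end WeylSum

section Combinatorics

variable {R : Type*} [CommRing R] (k : ℕ → R)

def convSumOn (M : ℕ) (P : ℕ → Prop) [DecidablePred P] : R :=
  ∑ u ∈ range (M + 1) with P u, k u * k (M - u)

variable {k} in
lemma convSumOn_congr {M : ℕ} {P Q : ℕ → Prop} [DecidablePred P] [DecidablePred Q]
    (h : ∀ u ≤ M, P u ↔ Q u) : convSumOn k M P = convSumOn k M Q :=
  sum_congr (filter_congr fun u hu => h u (Nat.lt_succ_iff.1 (mem_range.1 hu))) fun _ _ => rfl

lemma convSumOn_reflect (M : ℕ) (P : ℕ → Prop) [DecidablePred P] :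
    convSumOn k M P = convSumOn k M (fun u => P (M - u)) := by
  refine sum_nbij' (M - ·) (M - ·) ?_ ?_ ?_ ?_ ?_ <;>
    simp only [mem_filter, mem_range, and_imp]
  · exact fun u hu hP => ⟨by omega, by rwa [Nat.sub_sub_self (by omega)]⟩
  · exact fun u hu hP => ⟨by omega, hP⟩
  · exact fun u hu _ => Nat.sub_sub_self (by omega)
  · exact fun u hu _ => Nat.sub_sub_self (by omega)
  · exact fun u hu _ => by rw [Nat.sub_sub_self (by omega), mul_comm]

lemma convSumOn_and_add_and_not (M : ℕ) (P Q : ℕ → Prop) [DecidablePred P] [DecidablePred Q] :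
    convSumOn k M (fun u => P u ∧ Q u) + convSumOn k M (fun u => P u ∧ ¬Q u) = convSumOn k M P := by
  simp only [convSumOn, ← filter_filter]
  exact sum_filter_add_sum_filter_not _ _ _

lemma convSumOn_leibniz {n p j : ℕ} (hn : n ≤ p + j) :
    convSumOn k (p + j - n) (fun u => p ≤ u + n ∧ u ≤ p) =
      convSumOn k (p + j - n) (fun u => j ≤ u + n ∧ p ≤ u + n) -
        convSumOn k (p + j - n) (fun u => u + n < j ∧ u + n < p) := by
  wlog hjp : j ≤ p generalizing p j
  -- the reflection `u ↦ p + j - n - u` exchanges the roles of `p` and `j` on the left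
  · have hswap := this (p := j) (j := p) (by omega) (by omega)
    rw [add_comm j p] at hswap
    have hreflect : convSumOn k (p + j - n) (fun u => p ≤ u + n ∧ u ≤ p) =
        convSumOn k (p + j - n) (fun u => j ≤ u + n ∧ u ≤ j) := by
      rw [convSumOn_reflect]
      exact convSumOn_congr fun u hu => by omega
    rw [hreflect, hswap]
    congr 1 <;> exact convSumOn_congr fun u hu => by omega
  have hupper : convSumOn k (p + j - n) (fun u => j ≤ u + n ∧ p ≤ u + n) =
      convSumOn k (p + j - n) (fun u => p ≤ u + n ∧ u ≤ p) + convSumOn k (p + j - n) (p < ·) := by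
    rw [← convSumOn_and_add_and_not k _ _ (· ≤ p)]
    congr 1 <;> exact convSumOn_congr fun u hu => by omega
  have hlower : convSumOn k (p + j - n) (fun u => u + n < j ∧ u + n < p) =
      convSumOn k (p + j - n) (p < ·) := by
    rw [convSumOn_reflect]
    exact convSumOn_congr fun u hu => by omega
  rw [hupper, hlower, add_sub_cancel_right]

def leibnizCoeff (t j p : ℕ) : R :=
  (if j ≤ t ∧ t - j ≤ p ∧ p ≤ t then k (p + j - t) else 0) -
    if t < j ∧ t < p then k (p + j - t) else 0

lemma sum_mul_leibnizCoeff {n p j B : ℕ} (hn : n ≤ p + j) (hB : p + j < B) :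
    ∑ u ∈ range B, k u * leibnizCoeff k (u + n) j p =
      convSumOn k (p + j - n) (fun u => j ≤ u + n ∧ p ≤ u + n) -
        convSumOn k (p + j - n) (fun u => u + n < j ∧ u + n < p) := by
  have hidx : ∀ u, p + j - (u + n) = p + j - n - u := fun u => by omega
  simp only [leibnizCoeff, hidx, mul_sub, mul_ite, mul_zero, sum_sub_distrib, ← sum_filter,
    convSumOn]
  congr 1 <;> refine sum_congr ?_ fun _ _ => rfl <;> ext u <;> simp only [mem_filter, mem_range] <;>
    omega

lemma sum_ite_mul_ite_eq_convSumOn {n p j : ℕ} (hn : n ≤ p + j) :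
    ∑ q ∈ range (n + 1),
        (if n - q ≤ p then k (p - (n - q)) else 0) * (if q ≤ j then k (j - q) else 0) =
      convSumOn k (p + j - n) (fun u => p ≤ u + n ∧ u ≤ p) := by
  simp only [ite_zero_mul_ite_zero, ← sum_filter, convSumOn]
  refine sum_nbij' (fun q => p + q - n) (fun u => u + n - p) ?_ ?_ ?_ ?_ ?_ <;>
    simp only [mem_filter, mem_range, and_imp]
  · exact fun q hq hp hj => by omega
  · exact fun u hu hp hj => by omega
  · exact fun q hq hp hj => by omega
  · exact fun u hu hp hj => by omega
  · exact fun q hq hp hj => by rw [show p - (n - q) = p + q - n by omega,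
      show p + j - n - (p + q - n) = j - q by omega]

lemma sum_ite_mul_ite_eq_sum_mul_leibnizCoeff {n p j B : ℕ} (hB : p + j < B) :
    ∑ q ∈ range (n + 1),
        (if n - q ≤ p then k (p - (n - q)) else 0) * (if q ≤ j then k (j - q) else 0) =
      ∑ u ∈ range B, k u * leibnizCoeff k (u + n) j p := by
  rcases le_or_gt n (p + j) with hn | hn
  · rw [sum_ite_mul_ite_eq_convSumOn k hn, sum_mul_leibnizCoeff k hn hB, convSumOn_leibniz k hn]
  · rw [sum_eq_zero, sum_eq_zero]
    · exact fun u _ => by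
        rw [leibnizCoeff, if_neg (by omega), if_neg (by omega), sub_zero, mul_zero]
    · exact fun q hq => by rw [ite_zero_mul_ite_zero, if_neg (by simp at hq; omega)]

end Combinatorics

noncomputable def weylLeibniz (k : ℕ → ℝ) (F G : ℕ → ℂ) (t : ℕ) : ℂ :=
  (∑ j ∈ range (t + 1), G j * ∑ p ∈ Icc (t - j) t, (k (p + j - t) : ℂ) * F p) -
    ∑ᶠ (j : ℕ) (_ : t < j), G j * ∑ᶠ (p : ℕ) (_ : t < p), (k (p + j - t) : ℂ) * F p

section WeylLeibniz

variable {F G : ℕ → ℂ} {N : ℕ}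

lemma weylLeibniz_eq_sum (hF : ∀ m ≥ N, F m = 0) (hG : ∀ m ≥ N, G m = 0) (k : ℕ → ℝ) (t : ℕ) :
    weylLeibniz k F G t = ∑ j ∈ range N, ∑ p ∈ range N, leibnizCoeff k t j p • (G j * F p) := by
  have hF' : ∀ j, ∀ m ≥ N, (k (m + j - t) : ℂ) * F m = 0 := fun j m hm => by rw [hF m hm, mul_zero]
  have hG' : ∀ c : ℕ → ℂ, ∀ m ≥ N, G m * c m = 0 := fun c m hm => by rw [hG m hm, zero_mul]
  have hcoeff : ∀ j p, leibnizCoeff k t j p • (G j * F p) =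
      (if j ∈ range (t + 1) then
        (if p ∈ Icc (t - j) t then G j * ((k (p + j - t) : ℂ) * F p) else 0) else 0) -
      (if t < j then (if t < p then G j * ((k (p + j - t) : ℂ) * F p) else 0) else 0) := by
    intro j p
    simp only [leibnizCoeff, mem_range, mem_Icc, Complex.real_smul]
    split_ifs <;> first | (exfalso; omega) | push_cast; ring
  simp only [weylLeibniz, sum_eq_sum_range_ite (hF' _), finsum_cond_eq_sum_range_ite (hF' _),
    sum_eq_sum_range_ite (hG' _), finsum_cond_eq_sum_range_ite (hG' _)]
  simp only [hcoeff, sum_sub_distrib, sum_ite_irrel, sum_const_zero, mul_sum, mul_ite, mul_zero]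

lemma weylLeibniz_eq_zero_of_le (hF : ∀ m ≥ N, F m = 0) (hG : ∀ m ≥ N, G m = 0) (k : ℕ → ℝ) :
    ∀ t ≥ 2 * N, weylLeibniz k F G t = 0 := fun t ht => by
  rw [weylLeibniz_eq_sum hF hG]
  refine sum_eq_zero fun j hj => sum_eq_zero fun p hp => ?_
  simp only [mem_range] at hj hp
  rw [leibnizCoeff, if_neg (by omega), if_neg (by omega), sub_zero, zero_smul]

lemma conv_weylSum_weylSum (hF : ∀ m ≥ N, F m = 0) (hG : ∀ m ≥ N, G m = 0) (α : ℝ) :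
    conv (weylSum α F) (weylSum α G) = weylSum α (weylLeibniz (cesK α) F G) := by
  funext n
  calc conv (weylSum α F) (weylSum α G) n
      = ∑ j ∈ range N, ∑ p ∈ range N, (∑ q ∈ range (n + 1),
          (if n - q ≤ p then cesK α (p - (n - q)) else 0) * (if q ≤ j then cesK α (j - q) else 0)) •
            (G j * F p) := by
        simp only [conv, weylSum_eq_sum_range_ite hF, weylSum_eq_sum_range_ite hG, sum_mul_sum,
          smul_mul_smul_comm, sum_smul, mul_comm (F _) (G _)]
        exact sum_comm.trans ((sum_congr rfl fun _ _ => sum_comm).trans sum_comm)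
    _ = ∑ j ∈ range N, ∑ p ∈ range N,
          (∑ u ∈ range (2 * N), cesK α u * leibnizCoeff (cesK α) (u + n) j p) • (G j * F p) :=
        sum_congr rfl fun j hj => sum_congr rfl fun p hp => by
          simp only [mem_range] at hj hp
          rw [sum_ite_mul_ite_eq_sum_mul_leibnizCoeff (B := 2 * N) _ (by omega)]
    _ = ∑ u ∈ range (2 * N), cesK α u • weylLeibniz (cesK α) F G (u + n) := by
        simp only [weylLeibniz_eq_sum hF hG, smul_sum, smul_smul, sum_smul]
        exact (sum_comm.trans (sum_congr rfl fun _ _ => sum_comm)).symm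
    _ = weylSum α (weylLeibniz (cesK α) F G) n :=
        (weylSum_eq_sum_range (weylLeibniz_eq_zero_of_le hF hG _) α n).symm

end WeylLeibniz

lemma weylLeibniz_cesK0_zero (F G : ℕ → ℂ) : weylLeibniz (cesK0 0) F G = conv F G := by
  funext n
  have hδ : ∀ i, (cesK0 0 i : ℂ) = if i = 0 then 1 else 0 := fun i => by
    rw [cesK0, if_pos rfl]; split_ifs <;> simp
  have htail :
      ∑ᶠ (j) (_ : n < j), G j * ∑ᶠ (p) (_ : n < p), (cesK0 0 (p + j - n) : ℂ) * F p = 0 := by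
    simp only [finsum_eq_if]
    refine finsum_eq_zero_of_forall_eq_zero fun j => ite_eq_right_iff.2 fun hj => ?_
    suffices ∑ᶠ p, (if n < p then (cesK0 0 (p + j - n) : ℂ) * F p else 0) = 0 by rw [this, mul_zero]
    refine finsum_eq_zero_of_forall_eq_zero fun p => ite_eq_right_iff.2 fun hp => ?_
    rw [hδ, if_neg (by omega), zero_mul]
  rw [weylLeibniz, htail, sub_zero, conv]
  refine sum_congr rfl fun j hj => ?_
  have hjn : j ≤ n := Nat.lt_succ_iff.1 (mem_range.1 hj)
  rw [sum_eq_single_of_mem (n - j) (by simp) fun p hp hpj => by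
    rw [hδ, if_neg (by simp only [mem_Icc] at hp; omega), zero_mul]]
  rw [hδ, if_pos (by omega), one_mul, mul_comm]

theorem stmt7 (f g : ℕ → ℂ) (hf : (Function.support f).Finite)
    (hg : (Function.support g).Finite) (α : ℝ) (hα : 0 ≤ α) (n : ℕ) :
    weylDiff α (conv f g) n =
      (∑ j ∈ Finset.range (n + 1), weylDiff α g j *
          ∑ p ∈ Finset.Icc (n - j) n, (cesK0 α (p + j - n) : ℂ) * weylDiff α f p) -
        ∑ᶠ (j : ℕ) (_ : n < j), weylDiff α g j *
          ∑ᶠ (p : ℕ) (_ : n < p), (cesK0 α (p + j - n) : ℂ) * weylDiff α f p := by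
  change weylDiff α (conv f g) n = weylLeibniz (cesK0 α) (weylDiff α f) (weylDiff α g) n
  rcases hα.eq_or_lt with rfl | hα
  · simp only [weylDiff, if_pos, weylLeibniz_cesK0_zero]
  obtain ⟨Nf, hNf⟩ := exists_forall_ge_eq_zero hf
  obtain ⟨Ng, hNg⟩ := exists_forall_ge_eq_zero hg
  have hf' : ∀ m ≥ max Nf Ng, f m = 0 := fun m hm => hNf m (le_of_max_le_left hm)
  have hg' : ∀ m ≥ max Nf Ng, g m = 0 := fun m hm => hNg m (le_of_max_le_right hm)
  have hF := weylDiff_eq_zero_of_le hf' α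
  have hG := weylDiff_eq_zero_of_le hg' α
  have hkernel : cesK0 α = cesK α := funext fun i => if_neg hα.ne'
  rw [hkernel]
  calc weylDiff α (conv f g) n
      = weylDiff α (conv (weylSum α (weylDiff α f)) (weylSum α (weylDiff α g))) n := by
        rw [weylSum_weylDiff hα hf', weylSum_weylDiff hα hg']
    _ = weylDiff α (weylSum α (weylLeibniz (cesK α) (weylDiff α f) (weylDiff α g))) n := by
        rw [conv_weylSum_weylSum hF hG]
    _ = weylLeibniz (cesK α) (weylDiff α f) (weylDiff α g) n := by
        rw [weylDiff_weylSum hα (weylLeibniz_eq_zero_of_le hF hG _)]
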